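/- Let 1 ≤ q ≤ ∞ and s ∈ ℝ. Suppose the weighted convolution estimate ‖⟨·⟩^s (F ∗ G)‖_{L^q(ℝⁿ)} ≤ C ‖⟨·⟩^s F‖_{L^q} ‖⟨·⟩^s G‖_{L^q} holds for all nonnegative F, G ∈ L^q with ⟨·⟩^s F, ⟨·⟩^s G ∈ L^q. Then the discrete analogue ℓ^q_s(ℤⁿ) ∗ ℓ^q_s(ℤⁿ) ↪ ℓ^q_s(ℤⁿ) holds: ‖a∗b‖_{ℓ^q_s} ≤ C′‖a‖_{ℓ^q_s}‖b‖_{ℓ^q_s} for all a, b ∈ ℓ^q_s(ℤⁿ). -/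

import Mathlib

/-!
Test the continuous estimate on the step functions `F = u ∘ round`, `G = v ∘ round`, constant on
the unit cells `{x | round x = k}`. Coordinatewise rounding pushes Lebesgue measure forward to
counting measure, and `⟨x⟩ ≤ (1 + n) ⟨round x⟩ ≤ (1 + n)² ⟨x⟩`, so the weighted norms of `F`
and `G` are those of `u` and `v` up to constants. In the other direction
`(F ∗ G)(x) ≥ 4⁻ⁿ (u ∗ v)(round x)` for every `x`: on the box of half-side `1/8` centred at
`ℓ + (x - round x) / 2`, the point `y` rounds to `ℓ` and `x - y` rounds to `round x - ℓ`.
Finitely supported `u`, `v` give admissible `F`, `G`; general sequences follow by Fatou's lemma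
along finite truncations.
-/

open MeasureTheory
open scoped ENNReal NNReal

noncomputable section

/-- The Japanese bracket `⟨x⟩ = (1+‖x‖²)^{1/2}`. -/
def jb {n : ℕ} (x : EuclideanSpace ℝ (Fin n)) : ℝ := (1 + ‖x‖ ^ 2) ^ ((1:ℝ)/2)

/-- The Japanese bracket on `ℤⁿ`. -/
def jbZ {n : ℕ} (k : Fin n → ℤ) : ℝ := (1 + ∑ i, ((k i : ℝ)) ^ 2) ^ ((1:ℝ)/2)

/-- The weighted norm `‖a‖_{ℓ^q_s}` of a sequence on `ℤⁿ`. -/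
def lqsNorm {n : ℕ} (q : ℝ≥0∞) (s : ℝ) (a : (Fin n → ℤ) → ℂ) : ℝ≥0∞ :=
  eLpNorm (fun k => jbZ k ^ s * ‖a k‖) q Measure.count

open Filter Set Topology

theorem Real.rpow_le_rpow_abs_mul_rpow {a b c : ℝ} (ha : 0 < a) (hb : 0 < b) (hab : a ≤ c * b)
    (hba : b ≤ c * a) (s : ℝ) : a ^ s ≤ c ^ |s| * b ^ s := by
  have hc : 0 < c := pos_of_mul_pos_left (hb.trans_le hba) ha.le
  rcases le_total 0 s with hs | hs
  · rw [abs_of_nonneg hs, ← Real.mul_rpow hc.le hb.le]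
    exact Real.rpow_le_rpow ha.le hab hs
  · rw [abs_of_nonpos hs, Real.rpow_neg hc.le, ← Real.inv_rpow hc.le,
      ← Real.mul_rpow (by positivity) hb.le]
    exact Real.rpow_le_rpow_of_nonpos (by positivity) (by rwa [inv_mul_le_iff₀ hc]) hs

theorem memLp_count_of_support_subset {α E : Type*} [MeasurableSpace α]
    [MeasurableSingletonClass α] [Countable α] [NormedAddCommGroup E] {g : α → E} {A : Finset α}
    (hg : ∀ k ∉ A, g k = 0) (q : ℝ≥0∞) : MemLp g q Measure.count := by
  refine (memLp_indicator_const q A.finite_toSet.measurableSet (∑ k ∈ A, ‖g k‖)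
    (Or.inr (by simp [Measure.count_apply_finset]))).of_le
    StronglyMeasurable.of_discrete.aestronglyMeasurable (ae_of_all _ fun k => ?_)
  by_cases hk : k ∈ A
  · rw [indicator_of_mem (Finset.mem_coe.2 hk), Real.norm_of_nonneg (by positivity)]
    exact Finset.single_le_sum (f := fun k => ‖g k‖) (fun _ _ => norm_nonneg _) hk
  · simp [hg k hk]

section Truncation

variable {G R : Type*} [AddCommGroup G] [NormedRing R]

theorem indicator_mul_indicator_sub (A : Finset G) (a b : G → R) (k ℓ : G) :
    (A : Set G).indicator a ℓ * (A : Set G).indicator b (k - ℓ) =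
      {ℓ | ℓ ∈ A ∧ k - ℓ ∈ A}.indicator (fun ℓ => a ℓ * b (k - ℓ)) ℓ := by
  by_cases h1 : ℓ ∈ A <;> by_cases h2 : k - ℓ ∈ A <;> simp [h1, h2]

theorem norm_tsum_indicator_mul_le (A : Finset G) (a b : G → R) (k : G) :
    ‖∑' ℓ, (A : Set G).indicator a ℓ * (A : Set G).indicator b (k - ℓ)‖ ≤
      ∑ ℓ ∈ A, ‖(A : Set G).indicator a ℓ‖ * ‖(A : Set G).indicator b (k - ℓ)‖ := by
  rw [tsum_eq_sum (s := A) fun ℓ hℓ => by simp [hℓ]]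
  exact (norm_sum_le _ _).trans (Finset.sum_le_sum fun ℓ _ => norm_mul_le _ _)

theorem tendsto_tsum_indicator_mul [NormedSpace ℝ R] [FiniteDimensional ℝ R] {a b : G → R} {k : G}
    (hs : Summable fun ℓ => a ℓ * b (k - ℓ)) :
    Tendsto (fun A : Finset G => ∑' ℓ, (A : Set G).indicator a ℓ * (A : Set G).indicator b (k - ℓ))
      atTop (𝓝 (∑' ℓ, a ℓ * b (k - ℓ))) := by
  classical
  have := FiniteDimensional.complete ℝ R
  refine tendsto_tsum_of_dominated_convergence (summable_norm_iff.2 hs) (fun ℓ => ?_)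
    (Eventually.of_forall fun A ℓ => ?_)
  · refine tendsto_const_nhds.congr' ((eventually_ge_atTop {ℓ, k - ℓ}).mono fun A hA => ?_)
    have hℓ : ℓ ∈ {ℓ | ℓ ∈ A ∧ k - ℓ ∈ A} := ⟨hA (by simp), hA (by simp)⟩
    dsimp only
    rw [indicator_mul_indicator_sub, indicator_of_mem hℓ]
  · rw [indicator_mul_indicator_sub]
    exact norm_indicator_le_norm_self _ _

variable [Countable G] [MeasurableSpace G] [MeasurableSingletonClass G]
  [NormedSpace ℝ R] [FiniteDimensional ℝ R]

theorem eLpNorm_mul_norm_tsum_conv_le_of_finite_support {q : ℝ≥0∞} {ω : G → ℝ} {K : ℝ≥0∞}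
    (hfin : ∀ (A : Finset G) (u v : G → ℝ), 0 ≤ u → 0 ≤ v → (∀ k ∉ A, u k = 0) →
      (∀ k ∉ A, v k = 0) →
      eLpNorm (fun k => ω k * ∑ ℓ ∈ A, u ℓ * v (k - ℓ)) q Measure.count ≤
        K * eLpNorm (fun k => ω k * u k) q Measure.count *
          eLpNorm (fun k => ω k * v k) q Measure.count)
    (a b : G → R) :
    eLpNorm (fun k => ω k * ‖∑' ℓ, a ℓ * b (k - ℓ)‖) q Measure.count ≤
      K * eLpNorm (fun k => ω k * ‖a k‖) q Measure.count *
        eLpNorm (fun k => ω k * ‖b k‖) q Measure.count := by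
  classical
  -- Where the series diverges its `tsum` is the junk value `0`; the truncations are `0` there too,
  -- so that they converge pointwise to the integrand.
  let trunc : Finset G → G → ℝ := fun A k =>
    if Summable fun ℓ => a ℓ * b (k - ℓ) then
      ω k * ‖∑' ℓ, (A : Set G).indicator a ℓ * (A : Set G).indicator b (k - ℓ)‖
    else 0
  refine Lp.eLpNorm_le_of_ae_tendsto (u := atTop) (f := trunc) (Eventually.of_forall fun A => ?_)
    (fun _ => StronglyMeasurable.of_discrete.aestronglyMeasurable) (ae_of_all _ fun k => ?_)
  · let ua : G → ℝ := fun ℓ => ‖(A : Set G).indicator a ℓ‖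
    let ub : G → ℝ := fun ℓ => ‖(A : Set G).indicator b ℓ‖
    calc eLpNorm (trunc A) q Measure.count
        ≤ eLpNorm (fun k => ω k * ∑ ℓ ∈ A, ua ℓ * ub (k - ℓ)) q Measure.count := by
          refine eLpNorm_mono fun k => ?_
          have hsum : 0 ≤ ∑ ℓ ∈ A, ua ℓ * ub (k - ℓ) :=
            Finset.sum_nonneg fun _ _ => mul_nonneg (norm_nonneg _) (norm_nonneg _)
          simp only [trunc]
          split_ifs
          · rw [norm_mul, norm_mul, norm_norm, Real.norm_of_nonneg hsum]
            gcongr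
            exact norm_tsum_indicator_mul_le A a b k
          · rw [norm_zero]
            exact norm_nonneg _
      _ ≤ K * eLpNorm (fun k => ω k * ua k) q Measure.count *
            eLpNorm (fun k => ω k * ub k) q Measure.count :=
          hfin A ua ub (fun _ => norm_nonneg _) (fun _ => norm_nonneg _)
            (fun ℓ hℓ => by simp [ua, hℓ]) (fun ℓ hℓ => by simp [ub, hℓ])
      _ ≤ K * eLpNorm (fun k => ω k * ‖a k‖) q Measure.count *
            eLpNorm (fun k => ω k * ‖b k‖) q Measure.count := by
          gcongr <;> refine eLpNorm_mono fun k => ?_ <;>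
            simp only [norm_mul, ua, ub, norm_norm] <;>
            gcongr <;> exact norm_indicator_le_norm_self _ _
  · by_cases hs : Summable fun ℓ => a ℓ * b (k - ℓ)
    · simp only [trunc, if_pos hs]
      exact (tendsto_tsum_indicator_mul hs).norm.const_mul (ω k)
    · simp [trunc, hs, tsum_eq_zero_of_not_summable hs]

end Truncation

namespace LatticeTransfer

variable {n : ℕ}

section Rounding

def latticeRound (x : EuclideanSpace ℝ (Fin n)) : Fin n → ℤ := fun i => round (x i)

theorem measurable_latticeRound : Measurable (latticeRound (n := n)) := by
  refine measurable_pi_lambda _ fun i => ?_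
  simp only [latticeRound, round_eq]
  exact Int.measurable_floor.comp
    ((measurable_pi_apply i).comp (WithLp.measurable_ofLp _ _) |>.add_const _)

theorem latticeRound_eq_iff {x : EuclideanSpace ℝ (Fin n)} {k : Fin n → ℤ} :
    latticeRound x = k ↔
      x ∈ WithLp.ofLp ⁻¹' univ.pi fun i => Ico ((k i : ℝ) - 1 / 2) (k i + 1 / 2) := by
  simp [funext_iff, latticeRound, round_eq_iff]

theorem latticeRound_eq_of_abs_sub_lt {x : EuclideanSpace ℝ (Fin n)} {k : Fin n → ℤ}
    (h : ∀ i, |x i - k i| < 1 / 2) : latticeRound x = k := by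
  refine latticeRound_eq_iff.2 fun i _ => ?_
  have := abs_lt.1 (h i)
  constructor <;> linarith [this.1, this.2]

theorem measurePreserving_latticeRound :
    MeasurePreserving (latticeRound (n := n)) volume Measure.count := by
  refine ⟨measurable_latticeRound, Measure.ext_of_singleton fun k => ?_⟩
  rw [Measure.map_apply measurable_latticeRound (measurableSet_singleton k),
    Measure.count_singleton,
    show latticeRound ⁻¹' {k} = _ from Set.ext fun _ => latticeRound_eq_iff,
    (PiLp.volume_preserving_ofLp _).measure_preimage
      (MeasurableSet.univ_pi fun _ => measurableSet_Ico).nullMeasurableSet, Real.volume_pi_Ico]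
  norm_num

theorem norm_sub_latticeRound_le (x : EuclideanSpace ℝ (Fin n)) :
    ‖x - WithLp.toLp 2 fun i => (latticeRound x i : ℝ)‖ ≤ n := by
  have hsq : ‖x - WithLp.toLp 2 fun i => (latticeRound x i : ℝ)‖ ^ 2 ≤ n / 4 := by
    rw [EuclideanSpace.real_norm_sq_eq]
    calc ∑ i, ((x - WithLp.toLp 2 fun i => (latticeRound x i : ℝ)) i) ^ 2
        ≤ ∑ _ : Fin n, (1 / 2 : ℝ) ^ 2 := Finset.sum_le_sum fun i _ => by
          simpa [latticeRound, sq_abs] using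
            pow_le_pow_left₀ (abs_nonneg _) (abs_sub_round (x i)) 2
      _ = n / 4 := by simp; ring
  have hn : (n / 4 : ℝ) ≤ (n : ℝ) ^ 2 := by
    rcases Nat.eq_zero_or_pos n with rfl | hn
    · simp
    · have : (1 : ℝ) ≤ n := by exact_mod_cast hn
      nlinarith
  exact (pow_le_pow_iff_left₀ (norm_nonneg _) (Nat.cast_nonneg n) two_ne_zero).1 (hsq.trans hn)

variable {E F : Type*} [NormedAddCommGroup E] [NormedAddCommGroup F] {q : ℝ≥0∞}

theorem eLpNorm_comp_latticeRound (g : (Fin n → ℤ) → E) (q : ℝ≥0∞) :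
    eLpNorm (g ∘ latticeRound) q volume = eLpNorm g q Measure.count :=
  eLpNorm_comp_measurePreserving StronglyMeasurable.of_discrete.aestronglyMeasurable
    measurePreserving_latticeRound

theorem eLpNorm_le_of_le_comp_latticeRound {h : EuclideanSpace ℝ (Fin n) → E}
    {g : (Fin n → ℤ) → F} {c : ℝ≥0} (hle : ∀ x, ‖h x‖ ≤ c * ‖g (latticeRound x)‖) :
    eLpNorm h q volume ≤ c * eLpNorm g q Measure.count := by
  rw [← eLpNorm_comp_latticeRound]
  exact eLpNorm_le_nnreal_smul_eLpNorm_of_ae_le_mul (ae_of_all _ hle) q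

theorem eLpNorm_le_of_comp_latticeRound_le {g : (Fin n → ℤ) → E}
    {h : EuclideanSpace ℝ (Fin n) → F} {c : ℝ≥0} (hle : ∀ x, ‖g (latticeRound x)‖ ≤ c * ‖h x‖) :
    eLpNorm g q Measure.count ≤ c * eLpNorm h q volume := by
  rw [← eLpNorm_comp_latticeRound]
  exact eLpNorm_le_nnreal_smul_eLpNorm_of_ae_le_mul (ae_of_all _ hle) q

theorem memLp_comp_latticeRound {A : Finset (Fin n → ℤ)} {g : (Fin n → ℤ) → E}
    (hg : ∀ k ∉ A, g k = 0) (q : ℝ≥0∞) : MemLp (fun x => g (latticeRound x)) q volume :=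
  (memLp_count_of_support_subset hg q).comp_measurePreserving measurePreserving_latticeRound

end Rounding

section ConvBox

def convBox (x : EuclideanSpace ℝ (Fin n)) (ℓ : Fin n → ℤ) : Set (EuclideanSpace ℝ (Fin n)) :=
  WithLp.ofLp ⁻¹' Metric.closedBall (fun i => ℓ i + (x i - latticeRound x i) / 2) (1 / 8)

variable {x y : EuclideanSpace ℝ (Fin n)} {ℓ : Fin n → ℤ}

theorem mem_convBox_iff :
    y ∈ convBox x ℓ ↔ ∀ i, |y i - (ℓ i + (x i - latticeRound x i) / 2)| ≤ 1 / 8 := by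
  simp [convBox, dist_pi_le_iff, Real.dist_eq]

theorem measurableSet_convBox : MeasurableSet (convBox x ℓ) :=
  measurableSet_closedBall.preimage (WithLp.measurable_ofLp _ _)

theorem volume_real_convBox : volume.real (convBox x ℓ) = (4 : ℝ)⁻¹ ^ n := by
  rw [measureReal_def, convBox, (PiLp.volume_preserving_ofLp _).measure_preimage
    measurableSet_closedBall.nullMeasurableSet, Real.volume_pi_closedBall _ (by norm_num)]
  norm_num

theorem latticeRound_of_mem_convBox (hy : y ∈ convBox x ℓ) : latticeRound y = ℓ := by
  refine latticeRound_eq_of_abs_sub_lt fun i => ?_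
  have hy := abs_le.1 (mem_convBox_iff.1 hy i)
  have hx := abs_le.1 (abs_sub_round (x i))
  simp only [latticeRound] at hy
  rw [abs_lt]
  constructor <;> linarith [hx.1, hx.2, hy.1, hy.2]

theorem latticeRound_sub_of_mem_convBox (hy : y ∈ convBox x ℓ) :
    latticeRound (x - y) = latticeRound x - ℓ := by
  refine latticeRound_eq_of_abs_sub_lt fun i => ?_
  have hy := abs_le.1 (mem_convBox_iff.1 hy i)
  have hx := abs_le.1 (abs_sub_round (x i))
  have hk : ((latticeRound x - ℓ) i : ℝ) = round (x i) - ℓ i := by simp [latticeRound]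
  simp only [latticeRound] at hy
  rw [PiLp.sub_apply, hk, abs_lt]
  constructor <;> linarith [hx.1, hx.2, hy.1, hy.2]

theorem pairwiseDisjoint_convBox (x : EuclideanSpace ℝ (Fin n)) (A : Set (Fin n → ℤ)) :
    A.PairwiseDisjoint (convBox x) := fun _ _ _ _ hne =>
  Set.disjoint_left.2 fun _ hy hy' =>
    hne ((latticeRound_of_mem_convBox hy).symm.trans (latticeRound_of_mem_convBox hy'))

theorem sum_mul_le_integral_comp_latticeRound {u v : (Fin n → ℤ) → ℝ} (hu : 0 ≤ u) (hv : 0 ≤ v)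
    (A : Finset (Fin n → ℤ))
    (hint : Integrable (fun y => u (latticeRound y) * v (latticeRound (x - y)))) :
    (4 : ℝ)⁻¹ ^ n * ∑ ℓ ∈ A, u ℓ * v (latticeRound x - ℓ) ≤
      ∫ y, u (latticeRound y) * v (latticeRound (x - y)) := by
  have hbox : ∀ ℓ ∈ A, ∫ y in convBox x ℓ, u (latticeRound y) * v (latticeRound (x - y)) =
      (4 : ℝ)⁻¹ ^ n * (u ℓ * v (latticeRound x - ℓ)) := fun ℓ _ => by
    rw [setIntegral_congr_fun (g := fun _ => u ℓ * v (latticeRound x - ℓ)) measurableSet_convBox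
        fun y hy => by rw [latticeRound_of_mem_convBox hy, latticeRound_sub_of_mem_convBox hy],
      setIntegral_const, volume_real_convBox, smul_eq_mul]
  calc (4 : ℝ)⁻¹ ^ n * ∑ ℓ ∈ A, u ℓ * v (latticeRound x - ℓ)
      = ∫ y in ⋃ ℓ ∈ A, convBox x ℓ, u (latticeRound y) * v (latticeRound (x - y)) := by
        rw [integral_biUnion_finset A (fun _ _ => measurableSet_convBox)
          (pairwiseDisjoint_convBox x A) fun _ _ => hint.integrableOn, Finset.mul_sum]
        exact (Finset.sum_congr rfl hbox).symm
    _ ≤ ∫ y, u (latticeRound y) * v (latticeRound (x - y)) :=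
        setIntegral_le_integral hint (ae_of_all _ fun y => mul_nonneg (hu _) (hv _))

end ConvBox

section Weights

theorem jb_eq_sqrt (x : EuclideanSpace ℝ (Fin n)) : jb x = √(1 + ‖x‖ ^ 2) := by
  rw [jb, Real.sqrt_eq_rpow]

theorem jb_pos (x : EuclideanSpace ℝ (Fin n)) : 0 < jb x := by
  rw [jb_eq_sqrt]
  positivity

theorem jb_le_mul_jb (x y : EuclideanSpace ℝ (Fin n)) : jb x ≤ (1 + ‖x - y‖) * jb y := by
  have hx : ‖x‖ ≤ ‖y‖ + ‖x - y‖ := norm_le_norm_add_norm_sub' x y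
  rw [jb_eq_sqrt, jb_eq_sqrt, Real.sqrt_le_iff]
  refine ⟨by positivity, ?_⟩
  rw [mul_pow, Real.sq_sqrt (by positivity)]
  nlinarith [pow_le_pow_left₀ (norm_nonneg x) hx 2, mul_nonneg (norm_nonneg (x - y))
    (sq_nonneg (‖y‖ - 1)), mul_nonneg (norm_nonneg (x - y)) (norm_nonneg y),
    mul_nonneg (sq_nonneg ‖x - y‖) (sq_nonneg ‖y‖)]

theorem jbZ_eq_jb (k : Fin n → ℤ) : jbZ k = jb (WithLp.toLp 2 fun i => (k i : ℝ)) := by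
  rw [jbZ, jb, EuclideanSpace.real_norm_sq_eq]

theorem jbZ_pos (k : Fin n → ℤ) : 0 < jbZ k := by
  rw [jbZ_eq_jb]
  exact jb_pos _

theorem jb_le_mul_jbZ_latticeRound (x : EuclideanSpace ℝ (Fin n)) :
    jb x ≤ (1 + n) * jbZ (latticeRound x) := by
  rw [jbZ_eq_jb]
  refine (jb_le_mul_jb x _).trans (mul_le_mul_of_nonneg_right ?_ (jb_pos _).le)
  linarith [norm_sub_latticeRound_le x]

theorem jbZ_latticeRound_le_mul_jb (x : EuclideanSpace ℝ (Fin n)) :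
    jbZ (latticeRound x) ≤ (1 + n) * jb x := by
  rw [jbZ_eq_jb]
  refine (jb_le_mul_jb _ x).trans (mul_le_mul_of_nonneg_right ?_ (jb_pos _).le)
  rw [norm_sub_rev]
  linarith [norm_sub_latticeRound_le x]

theorem norm_jb_rpow_le (s : ℝ) (x : EuclideanSpace ℝ (Fin n)) :
    ‖jb x ^ s‖ ≤ ((1 + n : ℝ≥0) ^ |s| : ℝ≥0) * ‖jbZ (latticeRound x) ^ s‖ := by
  rw [Real.norm_of_nonneg (Real.rpow_nonneg (jb_pos x).le s),
    Real.norm_of_nonneg (Real.rpow_nonneg (jbZ_pos _).le s)]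
  push_cast
  exact Real.rpow_le_rpow_abs_mul_rpow (jb_pos x) (jbZ_pos _) (jb_le_mul_jbZ_latticeRound x)
    (jbZ_latticeRound_le_mul_jb x) s

theorem norm_jbZ_rpow_le (s : ℝ) (x : EuclideanSpace ℝ (Fin n)) :
    ‖jbZ (latticeRound x) ^ s‖ ≤ ((1 + n : ℝ≥0) ^ |s| : ℝ≥0) * ‖jb x ^ s‖ := by
  rw [Real.norm_of_nonneg (Real.rpow_nonneg (jb_pos x).le s),
    Real.norm_of_nonneg (Real.rpow_nonneg (jbZ_pos _).le s)]
  push_cast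
  exact Real.rpow_le_rpow_abs_mul_rpow (jbZ_pos _) (jb_pos x) (jbZ_latticeRound_le_mul_jb x)
    (jb_le_mul_jbZ_latticeRound x) s

end Weights

section FiniteSupport

def WeightedConvolutionBound (q : ℝ≥0∞) (w : EuclideanSpace ℝ (Fin n) → ℝ) (C : ℝ≥0) : Prop :=
  ∀ F G : EuclideanSpace ℝ (Fin n) → ℝ,
    Measurable F → Measurable G → (∀ x, 0 ≤ F x) → (∀ x, 0 ≤ G x) →
    MemLp F q volume → MemLp (fun x => w x * F x) q volume →
    MemLp G q volume → MemLp (fun x => w x * G x) q volume →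
    eLpNorm (fun x => w x * ∫ y, F y * G (x - y)) q volume ≤
      C * eLpNorm (fun x => w x * F x) q volume * eLpNorm (fun x => w x * G x) q volume

variable {q : ℝ≥0∞} {w : EuclideanSpace ℝ (Fin n) → ℝ} {ω : (Fin n → ℤ) → ℝ} {B : ℝ≥0}
  {A : Finset (Fin n → ℤ)} {u v : (Fin n → ℤ) → ℝ}

theorem memLp_mul_comp_latticeRound (hw : Measurable w)
    (hwω : ∀ x, ‖w x‖ ≤ B * ‖ω (latticeRound x)‖) (hu : ∀ k ∉ A, u k = 0) :
    MemLp (fun x => w x * u (latticeRound x)) q volume := by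
  refine (memLp_comp_latticeRound (A := A) (g := fun k => (B : ℝ) * (ω k * u k))
    (fun k hk => by simp [hu k hk]) q).of_le
    (hw.mul ((measurable_of_countable u).comp measurable_latticeRound)).aestronglyMeasurable
    (ae_of_all _ fun x => ?_)
  simp only [norm_mul, NNReal.norm_eq, ← mul_assoc]
  exact mul_le_mul_of_nonneg_right (hwω x) (norm_nonneg _)

theorem eLpNorm_mul_comp_latticeRound_le (hwω : ∀ x, ‖w x‖ ≤ B * ‖ω (latticeRound x)‖) :
    eLpNorm (fun x => w x * u (latticeRound x)) q volume ≤
      B * eLpNorm (fun k => ω k * u k) q Measure.count :=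
  eLpNorm_le_of_le_comp_latticeRound fun x => by
    simp only [norm_mul, ← mul_assoc]
    exact mul_le_mul_of_nonneg_right (hwω x) (norm_nonneg _)

theorem integrable_comp_latticeRound_mul (hu : ∀ k ∉ A, u k = 0) (hv : ∀ k ∉ A, v k = 0)
    (x : EuclideanSpace ℝ (Fin n)) :
    Integrable (fun y => u (latticeRound y) * v (latticeRound (x - y))) :=
  (memLp_one_iff_integrable.1 (memLp_comp_latticeRound hu 1)).mul_of_top_left
    ((memLp_comp_latticeRound hv ∞).comp_measurePreserving
      (Measure.measurePreserving_sub_left volume x))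

theorem eLpNorm_mul_sum_le_eLpNorm_mul_integral (hωw : ∀ x, ‖ω (latticeRound x)‖ ≤ B * ‖w x‖)
    (hu : 0 ≤ u) (hv : 0 ≤ v) (huA : ∀ k ∉ A, u k = 0) (hvA : ∀ k ∉ A, v k = 0) :
    eLpNorm (fun k => ω k * ∑ ℓ ∈ A, u ℓ * v (k - ℓ)) q Measure.count ≤
      (B * 4 ^ n : ℝ≥0) *
        eLpNorm (fun x => w x * ∫ y, u (latticeRound y) * v (latticeRound (x - y))) q volume := by
  refine eLpNorm_le_of_comp_latticeRound_le fun x => ?_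
  have hconv := sum_mul_le_integral_comp_latticeRound hu hv A
    (integrable_comp_latticeRound_mul huA hvA x)
  have hsum : 0 ≤ ∑ ℓ ∈ A, u ℓ * v (latticeRound x - ℓ) :=
    Finset.sum_nonneg fun _ _ => mul_nonneg (hu _) (hv _)
  have hint : 0 ≤ ∫ y, u (latticeRound y) * v (latticeRound (x - y)) :=
    integral_nonneg fun y => mul_nonneg (hu _) (hv _)
  rw [norm_mul, norm_mul, Real.norm_of_nonneg hsum, Real.norm_of_nonneg hint]
  push_cast
  calc ‖ω (latticeRound x)‖ * ∑ ℓ ∈ A, u ℓ * v (latticeRound x - ℓ)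
      ≤ (B * ‖w x‖) * (4 ^ n * ∫ y, u (latticeRound y) * v (latticeRound (x - y))) := by
        gcongr
        · exact hωw x
        · rw [← inv_mul_le_iff₀ (by positivity), ← inv_pow]
          exact hconv
    _ = B * 4 ^ n * (‖w x‖ * ∫ y, u (latticeRound y) * v (latticeRound (x - y))) := by ring

theorem eLpNorm_mul_sum_conv_le_of_weightedConvolutionBound {C : ℝ≥0}
    (hC : WeightedConvolutionBound q w C) (hw : Measurable w)
    (hwω : ∀ x, ‖w x‖ ≤ B * ‖ω (latticeRound x)‖) (hωw : ∀ x, ‖ω (latticeRound x)‖ ≤ B * ‖w x‖)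
    (hu : 0 ≤ u) (hv : 0 ≤ v) (huA : ∀ k ∉ A, u k = 0) (hvA : ∀ k ∉ A, v k = 0) :
    eLpNorm (fun k => ω k * ∑ ℓ ∈ A, u ℓ * v (k - ℓ)) q Measure.count ≤
      (4 ^ n * B ^ 3 * C : ℝ≥0) * eLpNorm (fun k => ω k * u k) q Measure.count *
        eLpNorm (fun k => ω k * v k) q Measure.count := by
  have hFG := hC (fun x => u (latticeRound x)) (fun x => v (latticeRound x))
    ((measurable_of_countable u).comp measurable_latticeRound)
    ((measurable_of_countable v).comp measurable_latticeRound) (fun _ => hu _) (fun _ => hv _)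
    (memLp_comp_latticeRound huA q) (memLp_mul_comp_latticeRound hw hwω huA)
    (memLp_comp_latticeRound hvA q) (memLp_mul_comp_latticeRound hw hwω hvA)
  calc eLpNorm (fun k => ω k * ∑ ℓ ∈ A, u ℓ * v (k - ℓ)) q Measure.count
      ≤ (B * 4 ^ n : ℝ≥0) *
          eLpNorm (fun x => w x * ∫ y, u (latticeRound y) * v (latticeRound (x - y))) q volume :=
        eLpNorm_mul_sum_le_eLpNorm_mul_integral hωw hu hv huA hvA
    _ ≤ (B * 4 ^ n : ℝ≥0) * (C * (B * eLpNorm (fun k => ω k * u k) q Measure.count) *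
          (B * eLpNorm (fun k => ω k * v k) q Measure.count)) := by
        gcongr
        refine hFG.trans ?_
        gcongr <;> exact eLpNorm_mul_comp_latticeRound_le hwω
    _ = (4 ^ n * B ^ 3 * C : ℝ≥0) * eLpNorm (fun k => ω k * u k) q Measure.count *
          eLpNorm (fun k => ω k * v k) q Measure.count := by
        push_cast
        ring

end FiniteSupport

end LatticeTransfer

open LatticeTransfer

theorem continuous_to_discrete_convolution_transfer_general (n : ℕ) (q : ℝ≥0∞) (s : ℝ)
    (h : ∃ C : ℝ≥0, 0 < C ∧ ∀ F G : EuclideanSpace ℝ (Fin n) → ℝ,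
      Measurable F → Measurable G → (∀ x, 0 ≤ F x) → (∀ x, 0 ≤ G x) →
      MemLp F q volume → MemLp (fun x => jb x ^ s * F x) q volume →
      MemLp G q volume → MemLp (fun x => jb x ^ s * G x) q volume →
      eLpNorm (fun x => jb x ^ s * ∫ y, F y * G (x - y)) q volume ≤
        C * eLpNorm (fun x => jb x ^ s * F x) q volume *
          eLpNorm (fun x => jb x ^ s * G x) q volume) :
    ∃ C' : ℝ≥0, 0 < C' ∧ ∀ a b : (Fin n → ℤ) → ℂ,
      lqsNorm q s (fun k => ∑' ℓ, a ℓ * b (k - ℓ)) ≤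
        C' * lqsNorm q s a * lqsNorm q s b := by
  obtain ⟨C, hC_pos, hC⟩ := h
  have hw : Measurable fun x : EuclideanSpace ℝ (Fin n) => jb x ^ s := by
    unfold jb
    fun_prop
  refine ⟨4 ^ n * ((1 + n : ℝ≥0) ^ |s|) ^ 3 * C, by positivity, fun a b => ?_⟩
  exact eLpNorm_mul_norm_tsum_conv_le_of_finite_support (fun A u v hu hv huA hvA =>
    eLpNorm_mul_sum_conv_le_of_weightedConvolutionBound hC hw (norm_jb_rpow_le s)
      (norm_jbZ_rpow_le s) hu hv huA hvA) a b

/-- **transference from continuous to discrete convolution.** Let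
`1 ≤ q ≤ ∞`, `s ∈ ℝ`. If the weighted convolution estimate
`‖⟨·⟩^s (F∗G)‖_{L^q} ≤ C ‖⟨·⟩^s F‖_{L^q} ‖⟨·⟩^s G‖_{L^q}` holds for all nonnegative
`F, G ∈ L^q` with `⟨·⟩^s F, ⟨·⟩^s G ∈ L^q`, then the discrete analogue holds:
`‖a∗b‖_{ℓ^q_s} ≤ C′ ‖a‖_{ℓ^q_s} ‖b‖_{ℓ^q_s}` for all `a, b ∈ ℓ^q_s(ℤⁿ)`. -/
theorem continuous_to_discrete_convolution_transfer (n : ℕ) (q : ℝ≥0∞) (s : ℝ)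
    (hq : 1 ≤ q)
    (h : ∃ C : ℝ≥0, 0 < C ∧ ∀ F G : EuclideanSpace ℝ (Fin n) → ℝ,
      Measurable F → Measurable G → (∀ x, 0 ≤ F x) → (∀ x, 0 ≤ G x) →
      MemLp F q volume → MemLp (fun x => jb x ^ s * F x) q volume →
      MemLp G q volume → MemLp (fun x => jb x ^ s * G x) q volume →
      eLpNorm (fun x => jb x ^ s * ∫ y, F y * G (x - y)) q volume ≤
        C * eLpNorm (fun x => jb x ^ s * F x) q volume *
          eLpNorm (fun x => jb x ^ s * G x) q volume) :
    ∃ C' : ℝ≥0, 0 < C' ∧ ∀ a b : (Fin n → ℤ) → ℂ,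
      lqsNorm q s (fun k => ∑' ℓ, a ℓ * b (k - ℓ)) ≤
        C' * lqsNorm q s a * lqsNorm q s b :=
  continuous_to_discrete_convolution_transfer_general n q s h
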